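/- arXiv:2001.00389 — 7 statements merged into one kernel-verified Lean document; each statement's English description precedes it below -/
import Mathlib

section
/- The real linear span of the set of all n×n matrices with entries in {0,1} having exactly one entry equal to 1 in each row (valency-one matrices) has dimension n(n-1)+1 as a subspace of the space of n×n real matrices. -/
/-- An `n × n` real matrix is valency-one if its entries are `0` or `1`
with exactly one entry `1` in each row, i.e. it is the adjacency matrix
of a function `Fin n → Fin n`. -/
def valencyOne {n : ℕ} (M : Matrix (Fin n) (Fin n) ℝ) : Prop :=
  ∃ f : Fin n → Fin n, M = Matrix.of fun i j => if f i = j then (1 : ℝ) else 0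

/-- The adjacency matrix of a function. -/
def funMat {n : ℕ} (f : Fin n → Fin n) : Matrix (Fin n) (Fin n) ℝ :=
  Matrix.of fun i j => if f i = j then (1 : ℝ) else 0

lemma funMat_row_sum {n : ℕ} (f : Fin n → Fin n) (i : Fin n) :
    ∑ k, funMat f i k = 1 := by
  simp [funMat]

theorem span_valencyOne_finrank (n : ℕ) (hn : 1 ≤ n) :
    Module.finrank ℝ
      ↥(Submodule.span ℝ {M : Matrix (Fin n) (Fin n) ℝ | valencyOne M}) =
      n * (n - 1) + 1 := by
  haveI : NeZero n := ⟨by omega⟩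
  set i0 : Fin n := 0 with hi0
  let L : Matrix (Fin n) (Fin n) ℝ →ₗ[ℝ] ({j : Fin n // j ≠ i0} → ℝ) :=
    { toFun := fun M j => (∑ k, M j.1 k) - ∑ k, M i0 k
      map_add' := by
        intro M N; funext j
        simp [Finset.sum_add_distrib]; ring
      map_smul' := by
        intro c M; funext j
        simp only [Matrix.smul_apply, smul_eq_mul, Pi.smul_apply,
          RingHom.id_apply, mul_sub, Finset.mul_sum] }
  have hL : ∀ (M : Matrix (Fin n) (Fin n) ℝ) (j : {j : Fin n // j ≠ i0}),
      L M j = (∑ k, M j.1 k) - ∑ k, M i0 k := fun _ _ => rfl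
  have hspan : Submodule.span ℝ {M : Matrix (Fin n) (Fin n) ℝ | valencyOne M}
      = LinearMap.ker L := by
    apply le_antisymm
    · rw [Submodule.span_le]
      rintro M ⟨f, rfl⟩
      simp only [SetLike.mem_coe, LinearMap.mem_ker]
      funext j
      have h1 : (Matrix.of fun i j => if f i = j then (1:ℝ) else 0) = funMat f := rfl
      rw [hL, h1, funMat_row_sum, funMat_row_sum]
      simp
    · intro M hM
      have hrow : ∀ a : Fin n, ∑ k, M a k = ∑ k, M i0 k := by
        intro a
        by_cases h : a = i0
        · rw [h]
        · have := congrFun hM ⟨a, h⟩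
          rw [hL] at this
          simpa [sub_eq_zero] using this
      have key : M = (∑ k, M i0 k) • funMat (fun _ => i0) +
          ∑ i, ∑ j, M i j • (funMat (Function.update (fun _ => i0) i j)
            - funMat (fun _ => i0)) := by
        ext a b
        simp only [Matrix.add_apply, Matrix.smul_apply, Matrix.sub_apply,
          Matrix.sum_apply, smul_eq_mul, funMat, Matrix.of_apply]
        have hsum : (∑ i, ∑ j, M i j *
              ((if Function.update (fun _ => i0) i j a = b then (1:ℝ) else 0)
                - if i0 = b then (1:ℝ) else 0))
            = ∑ j, M a j * ((if j = b then (1:ℝ) else 0)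
                - if i0 = b then (1:ℝ) else 0) := by
          rw [Finset.sum_eq_single a]
          · apply Finset.sum_congr rfl
            intro j _
            rw [Function.update_self]
          · intro i _ hi
            apply Finset.sum_eq_zero
            intro j _
            rw [Function.update_of_ne (Ne.symm hi)]
            simp
          · intro h; exact absurd (Finset.mem_univ a) h
        rw [hsum]
        simp only [mul_sub]
        rw [Finset.sum_sub_distrib]
        have h1 : ∑ j : Fin n, M a j * (if j = b then (1:ℝ) else 0) = M a b := by
          rw [Finset.sum_eq_single b]
          · simp
          · intro c _ hc; simp [hc]
          · intro h; exact absurd (Finset.mem_univ b) h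
        have h2 : ∑ j : Fin n, M a j * (if i0 = b then (1:ℝ) else 0)
            = (∑ j, M a j) * (if i0 = b then (1:ℝ) else 0) := by
          rw [Finset.sum_mul]
        rw [h1, h2, hrow a]
        ring
      rw [key]
      apply Submodule.add_mem
      · apply Submodule.smul_mem
        exact Submodule.subset_span ⟨fun _ => i0, rfl⟩
      · apply Submodule.sum_mem
        intro i _
        apply Submodule.sum_mem
        intro j _
        apply Submodule.smul_mem
        apply Submodule.sub_mem
        · exact Submodule.subset_span ⟨Function.update (fun _ => i0) i j, rfl⟩
        · exact Submodule.subset_span ⟨fun _ => i0, rfl⟩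
  rw [hspan]
  have hsurj : Function.Surjective L := by
    intro v
    refine ⟨Matrix.of fun a b =>
      if b = i0 then (if h : a = i0 then 0 else v ⟨a, h⟩) else 0, ?_⟩
    funext j
    rw [hL]
    have hsum : ∀ a : Fin n, ∑ k, (Matrix.of fun a b =>
        if b = i0 then (if h : a = i0 then (0:ℝ) else v ⟨a, h⟩) else 0) a k
        = if h : a = i0 then (0:ℝ) else v ⟨a, h⟩ := by
      intro a
      simp only [Matrix.of_apply]
      rw [Finset.sum_eq_single i0] <;> simp_all
    rw [hsum, hsum]
    simp [j.2]
  have hcard : Fintype.card {j : Fin n // j ≠ i0} = n - 1 := by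
    have := Fintype.card_subtype_compl (fun j : Fin n => j = i0)
    simp only [Fintype.card_subtype_eq, Fintype.card_fin] at this
    exact this
  have hrange : Module.finrank ℝ (LinearMap.range L) = n - 1 := by
    rw [LinearMap.range_eq_top.mpr hsurj]
    rw [finrank_top, Module.finrank_fintype_fun_eq_card, hcard]
  have hdom : Module.finrank ℝ (Matrix (Fin n) (Fin n) ℝ) = n * n := by
    rw [Module.finrank_matrix]
    simp
  have h1 := LinearMap.finrank_range_add_finrank_ker L
  rw [hrange, hdom] at h1
  obtain ⟨m, rfl⟩ : ∃ m, n = m + 1 := ⟨n - 1, by omega⟩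
  have h2 : (m + 1) * (m + 1) = (m + 1) * m + (m + 1) := by ring
  simp only [Nat.add_sub_cancel] at h1 ⊢
  omega
end

section
/- For any n ≥ 1, if A_1, …, A_k are n×n valency-one matrices such that Id_n, A_1, …, A_k are linearly independent over ℝ, then k ≤ n(n-1). -/
/-- The row-sum linear map on matrices. -/
noncomputable def rowSum (n : ℕ) : Matrix (Fin n) (Fin n) ℝ →ₗ[ℝ] (Fin n → ℝ) where
  toFun M := fun i => ∑ j, M i j
  map_add' M N := by ext i; simp [Finset.sum_add_distrib]
  map_smul' c M := by ext i; simp [Finset.mul_sum]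

lemma rowSum_valencyOne {n : ℕ} {M : Matrix (Fin n) (Fin n) ℝ} (h : valencyOne M) :
    rowSum n M = fun _ => 1 := by
  obtain ⟨f, rfl⟩ := h
  ext i
  simp [rowSum]

lemma rowSum_one {n : ℕ} : rowSum n (1 : Matrix (Fin n) (Fin n) ℝ) = fun _ => 1 := by
  ext i
  simp [rowSum, Matrix.one_apply]

lemma rowSum_surj (n : ℕ) : Function.Surjective (rowSum n) := by
  intro v
  refine ⟨Matrix.of fun i j => if i = j then v i else 0, ?_⟩
  ext i
  simp [rowSum]

theorem minimal_network_inputs_le (n k : ℕ) (hn : 1 ≤ n)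
    (A : Fin k → Matrix (Fin n) (Fin n) ℝ)
    (hA : ∀ i, valencyOne (A i))
    (hli : LinearIndependent ℝ
      (Fin.cons (1 : Matrix (Fin n) (Fin n) ℝ) A : Fin (k + 1) → Matrix (Fin n) (Fin n) ℝ)) :
    k ≤ n * (n - 1) := by
  set L := rowSum n
  -- the differences A i - 1 lie in ker L
  have hker : ∀ i, A i - 1 ∈ LinearMap.ker L := by
    intro i
    rw [LinearMap.mem_ker, map_sub, rowSum_valencyOne (hA i), rowSum_one, sub_self]
  set B : Fin k → LinearMap.ker L := fun i => ⟨A i - 1, hker i⟩ with hB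
  have hBli : LinearIndependent ℝ B := by
    rw [Fintype.linearIndependent_iff]
    intro c hc i
    have hc' : (∑ j, c j • (A j - 1)) = 0 := by
      have := congrArg (Subtype.val) hc
      simpa [hB] using this
    have key : ∑ j : Fin (k + 1), (Fin.cons (-∑ j, c j) c : Fin (k+1) → ℝ) j •
        (Fin.cons (1 : Matrix (Fin n) (Fin n) ℝ) A : Fin (k+1) → Matrix (Fin n) (Fin n) ℝ) j
        = 0 := by
      rw [Fin.sum_univ_succ]
      simp only [Fin.cons_succ, Fin.cons_zero]
      have expand : ∑ j, c j • (A j - 1) = (∑ j, c j • A j) - (∑ j, c j) • (1 : Matrix (Fin n) (Fin n) ℝ) := by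
        rw [Finset.sum_smul]
        rw [← Finset.sum_sub_distrib]
        congr 1
        ext j
        rw [smul_sub]
      rw [expand] at hc'
      rw [neg_smul]
      linear_combination (norm := abel) hc'
    have := (Fintype.linearIndependent_iff.mp hli) _ key
    have := this i.succ
    simpa using this
  have hcard : k ≤ Module.finrank ℝ (LinearMap.ker L) := by
    simpa using hBli.fintype_card_le_finrank
  have hrange : LinearMap.range L = ⊤ := LinearMap.range_eq_top.mpr (rowSum_surj n)
  have hrn : Module.finrank ℝ (LinearMap.range L) + Module.finrank ℝ (LinearMap.ker L)
      = Module.finrank ℝ (Matrix (Fin n) (Fin n) ℝ) :=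
    LinearMap.finrank_range_add_finrank_ker L
  rw [hrange] at hrn
  have h1 : Module.finrank ℝ (⊤ : Submodule ℝ (Fin n → ℝ)) = n := by
    simp [finrank_top]
  have h2 : Module.finrank ℝ (Matrix (Fin n) (Fin n) ℝ) = n * n := by
    simp [Module.finrank_matrix]
  rw [h1, h2] at hrn
  have hkn : Module.finrank ℝ (LinearMap.ker L) = n * n - n := by omega
  obtain ⟨m, rfl⟩ : ∃ m, n = m + 1 := ⟨n - 1, by omega⟩
  have hmm : (m + 1) * (m + 1) - (m + 1) = (m + 1) * m := by
    rw [Nat.mul_succ]; omega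
  simp only [Nat.add_sub_cancel]
  omega
end

section
/- Let A_1, A_2 be n×n valency-one matrices with A_1 ≠ Id_n, A_2 ≠ Id_n, and A_1 ≠ A_2. Then the matrices Id_n, A_1, A_2 are linearly independent over ℝ. -/
theorem two_distinct_inputs_minimal (n : ℕ)
    (A₁ A₂ : Matrix (Fin n) (Fin n) ℝ)
    (hA₁ : valencyOne A₁) (hA₂ : valencyOne A₂)
    (h₁ : A₁ ≠ 1) (h₂ : A₂ ≠ 1) (h₁₂ : A₁ ≠ A₂) :
    LinearIndependent ℝ ![(1 : Matrix (Fin n) (Fin n) ℝ), A₁, A₂] := by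
  obtain ⟨f, hf⟩ := hA₁
  obtain ⟨g, hg⟩ := hA₂
  -- f is not the identity
  have hfid : ∃ i, f i ≠ i := by
    by_contra h
    push_neg at h
    apply h₁
    ext i j
    simp [hf, Matrix.one_apply, h i]
  have hgid : ∃ i, g i ≠ i := by
    by_contra h
    push_neg at h
    apply h₂
    ext i j
    simp [hg, Matrix.one_apply, h i]
  have hfg : ∃ i, f i ≠ g i := by
    by_contra h
    push_neg at h
    apply h₁₂
    ext i j
    simp [hf, hg, h i]
  rw [Fintype.linearIndependent_iff]
  intro c hc
  have key : ∀ i j : Fin n,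
      c 0 * (if i = j then (1:ℝ) else 0) + c 1 * (if f i = j then (1:ℝ) else 0)
        + c 2 * (if g i = j then (1:ℝ) else 0) = 0 := by
    intro i j
    have := congrFun (congrFun hc i) j
    simpa [Fin.sum_univ_three, hf, hg, Matrix.one_apply, mul_comm] using this
  -- Main case analysis
  obtain ⟨i, hi⟩ := hfg
  have h0 : c 0 = 0 ∧ c 1 = 0 ∧ c 2 = 0 := by
    by_cases hfi : f i = i
    · -- then g i ≠ i
      have hgi : g i ≠ i := fun h => hi (hfi.trans h.symm)
      have e1 := key i (g i)
      rw [if_neg (fun h => hgi h.symm), if_neg (fun h => hi h), if_pos rfl] at e1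
      have hc2 : c 2 = 0 := by linarith
      obtain ⟨i', hi'⟩ := hfid
      have e2 := key i' (f i')
      rw [if_neg (fun h => hi' h.symm), if_pos rfl] at e2
      have hc1 : c 1 = 0 := by
        by_cases hgi' : g i' = f i'
        · rw [if_pos hgi'] at e2; linarith
        · rw [if_neg hgi'] at e2; linarith
      have e3 := key i i
      rw [if_pos rfl, if_pos hfi, if_neg hgi] at e3
      refine ⟨by linarith, hc1, hc2⟩
    · by_cases hgi : g i = i
      · have e1 := key i (f i)
        rw [if_neg (fun h => hfi h.symm), if_pos rfl,
          if_neg (fun h => hfi (h.symm.trans hgi))] at e1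
        have hc1 : c 1 = 0 := by linarith
        obtain ⟨i', hi'⟩ := hgid
        have e2 := key i' (g i')
        rw [if_neg (fun h => hi' h.symm), if_pos rfl] at e2
        have hc2 : c 2 = 0 := by
          by_cases hfi' : f i' = g i'
          · rw [if_pos hfi'] at e2; linarith
          · rw [if_neg hfi'] at e2; linarith
        have e3 := key i i
        rw [if_pos rfl, if_neg hfi, if_pos hgi] at e3
        refine ⟨by linarith, hc1, hc2⟩
      · have e1 := key i (f i)
        rw [if_neg (fun h => hfi h.symm), if_pos rfl, if_neg (fun h => hi h.symm)] at e1
        have e2 := key i (g i)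
        rw [if_neg (fun h => hgi h.symm), if_neg (fun h => hi h), if_pos rfl] at e2
        have e3 := key i i
        rw [if_pos rfl, if_neg hfi, if_neg hgi] at e3
        exact ⟨by linarith, by linarith, by linarith⟩
  intro j
  fin_cases j
  exacts [h0.1, h0.2.1, h0.2.2]
end

section
/- Let f, g : Fin n → Fin n be functions (representing n-cell networks with one asymmetric input) with associated adjacency matrices A_f and A_g defined by (A_f)_{ij} = 1 if f(i) = j and 0 otherwise, and A_f, A_g ≠ Id_n. Then span{Id_n, A_f} = span{Id_n, A_g} if and only if A_f = A_g. -/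
/-- The adjacency matrix of the one-input network given by `f : Fin n → Fin n`. -/
def adjM {n : ℕ} (f : Fin n → Fin n) : Matrix (Fin n) (Fin n) ℝ :=
  Matrix.of fun i j => if f i = j then (1 : ℝ) else 0

theorem span_eq_iff_adj_eq (n : ℕ) (f g : Fin n → Fin n)
    (hf : adjM f ≠ 1) (hg : adjM g ≠ 1) :
    Submodule.span ℝ ({1, adjM f} : Set (Matrix (Fin n) (Fin n) ℝ)) =
        Submodule.span ℝ ({1, adjM g} : Set (Matrix (Fin n) (Fin n) ℝ)) ↔
      adjM f = adjM g := by
  constructor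
  · intro h
    have hmem : adjM g ∈ Submodule.span ℝ ({1, adjM f} : Set (Matrix (Fin n) (Fin n) ℝ)) := by
      rw [h]
      exact Submodule.subset_span (by simp)
    rw [Submodule.mem_span_pair] at hmem
    obtain ⟨a, b, hab⟩ := hmem
    obtain ⟨i, hi⟩ : ∃ i, g i ≠ i := by
      by_contra hc
      push_neg at hc
      apply hg
      ext i j
      simp [adjM, Matrix.one_apply, hc i]
    have key : ∀ p q, a * (if p = q then (1:ℝ) else 0) +
        b * (if f p = q then (1:ℝ) else 0) = (if g p = q then (1:ℝ) else 0) := by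
      intro p q
      have := congrFun (congrFun hab p) q
      simpa [adjM, Matrix.one_apply, Matrix.add_apply, Matrix.smul_apply,
        smul_eq_mul] using this
    have h1 := key i (g i)
    have h2 := key i i
    rw [if_neg (fun hh => hi hh.symm), if_pos rfl] at h1
    rw [if_pos rfl, if_neg hi] at h2
    have hfg : f i = g i := by
      by_contra hfg
      rw [if_neg hfg] at h1
      simp at h1
    rw [if_pos hfg] at h1
    have hb : b = 1 := by linarith
    have hfi : f i ≠ i := hfg ▸ hi
    rw [if_neg hfi] at h2
    have ha : a = 0 := by linarith
    rw [ha, hb] at hab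
    simpa using hab
  · intro h
    rw [h]
end

section
/- For n ≥ 2, let F_1, …, F_{n-1} be the n-cell feed-forward one-input networks where F_i is the function Fin n → Fin n with F_i(1) = 1, F_i(j) = 1 for 2 ≤ j ≤ n-i+1, and F_i(j) = j-1 for n-i+2 ≤ j ≤ n, and let π be the cyclic permutation of Fin n. Then the n(n-1) matrices P_{π^j}^{-1} A_{F_i} P_{π^j}, for i = 1,…,n-1 and j = 0,…,n-1, are linearly independent in M_n(ℝ), where A_{F_i} is the adjacency matrix of F_i and P_{π^j} the permutation matrix of π^j. -/
open Fin.CommRing Fin.NatCast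

lemma adjM_mul {n : ℕ} (f g : Fin n → Fin n) :
    adjM f * adjM g = adjM (g ∘ f) := by
  ext i k
  simp only [adjM, Matrix.mul_apply, Matrix.of_apply, Function.comp_apply]
  rw [Finset.sum_eq_single (f i)]
  · simp
  · intro b _ hb; simp [Ne.symm hb]
  · simp

lemma adjM_id {n : ℕ} : adjM (fun a : Fin n => a) = 1 := by
  ext i j
  simp [adjM, Matrix.one_apply]

lemma rot_pow (m j : ℕ) (a : Fin (m+2)) :
    (finRotate (m+2) ^ j) a = a + (j : Fin (m+2)) := by
  induction j with
  | zero => simp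
  | succ j ih =>
    rw [pow_succ']
    simp only [Equiv.Perm.mul_apply, finRotate_succ_apply]
    rw [ih]
    push_cast
    ring

lemma conj_eq (m : ℕ) (f : Fin (m+2) → Fin (m+2)) (j : Fin (m+2)) :
    (adjM ⇑(finRotate (m+2) ^ (j : ℕ)))⁻¹ * adjM f * adjM ⇑(finRotate (m+2) ^ (j : ℕ))
      = adjM (fun a => f (a - j) + j) := by
  have hfun : ⇑(finRotate (m+2) ^ (j : ℕ)) = fun a : Fin (m+2) => a + j := by
    funext a
    rw [rot_pow, Fin.cast_val_eq_self]
  rw [hfun]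
  have hinv : (adjM (fun a : Fin (m+2) => a + j))⁻¹ = adjM (fun a : Fin (m+2) => a - j) := by
    apply Matrix.inv_eq_right_inv
    rw [adjM_mul]
    have : ((fun a : Fin (m+2) => a - j) ∘ (fun a : Fin (m+2) => a + j)) = fun a : Fin (m+2) => a := by
      funext a; simp
    rw [this, adjM_id]
  rw [hinv, adjM_mul, adjM_mul]
  rfl

lemma cond_iff (m : ℕ) (F : Fin (m+1) → (Fin (m+2) → Fin (m+2)))
    (hF : ∀ (i : Fin (m+1)) (j : Fin (m+2)),
      F i j = if h : (j : ℕ) + (i : ℕ) + 1 ≤ m+2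
        then (⟨0, by omega⟩ : Fin (m+2))
        else ⟨(j : ℕ) - 1, by have := j.isLt; omega⟩)
    (i : Fin (m+1)) (j a b : Fin (m+2)) :
    F i (a - j) + j = b ↔
      (j = b ∧ ((a - b : Fin (m+2)) : ℕ) + (i : ℕ) + 1 ≤ m+2) ∨
      (b = a - 1 ∧ m+2 < ((a - j : Fin (m+2)) : ℕ) + (i : ℕ) + 1) := by
  rw [hF]
  split_ifs with h
  · constructor
    · intro hb
      have hj : j = b := by
        rw [show (⟨0, by omega⟩ : Fin (m+2)) = 0 from rfl, zero_add] at hb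
        exact hb
      subst hj
      exact Or.inl ⟨rfl, h⟩
    · rintro (⟨rfl, h2⟩ | ⟨rfl, h2⟩)
      · rw [show (⟨0, by omega⟩ : Fin (m+2)) = 0 from rfl, zero_add]
      · omega
  · have hi : (i : ℕ) ≤ m := by have := i.isLt; omega
    have hu : 2 ≤ ((a - j : Fin (m+2)) : ℕ) := by omega
    have hne : a - j ≠ 0 := by
      intro h0
      rw [h0] at hu
      simp at hu
    have hsub : (⟨((a - j : Fin (m+2)) : ℕ) - 1, by have := (a-j).isLt; omega⟩ : Fin (m+2)) = (a - j) - 1 := by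
      apply Fin.ext
      rw [Fin.coe_sub_one, if_neg hne]
    rw [hsub]
    have hrw : (a - j) - 1 + j = a - 1 := by ring
    rw [hrw]
    constructor
    · intro hb
      exact Or.inr ⟨hb.symm, by omega⟩
    · rintro (⟨rfl, h2⟩ | ⟨rfl, h2⟩)
      · omega
      · rfl

/-- Let `F_1, …, F_{n-1}` be the feed-forward networks with
`n-1, n-3, n-4, …, 0` length-one tails (with the cells enumerated so that
cell `1` has a self-loop, cells `2, …, n-i+1` receive an edge from cell `1`,
and cells `n-i+2, …, n` form a tail), and let `π` be the cyclic permutation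
of the `n` cells.  Then the `n(n-1)` matrices `P_{π^j}⁻¹ A_{F_i} P_{π^j}`
are linearly independent, so their union is a minimal representative of
`Min_{n(n-1),n}`.  (Indices are 0-based: `F` is indexed by `i ∈ Fin (n-1)`,
representing `F_{i+1}`, and cell `k` is index `k-1`.) -/
theorem union_feedforward_minimal (n : ℕ) (hn : 2 ≤ n)
    (F : Fin (n - 1) → (Fin n → Fin n))
    (hF : ∀ (i : Fin (n - 1)) (j : Fin n),
      F i j = if h : (j : ℕ) + (i : ℕ) + 1 ≤ n
        then (⟨0, by omega⟩ : Fin n)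
        else ⟨(j : ℕ) - 1, by have := j.isLt; omega⟩) :
    LinearIndependent ℝ (fun p : Fin (n - 1) × Fin n =>
      (adjM ⇑(finRotate n ^ (p.2 : ℕ)))⁻¹ * adjM (F p.1) *
        adjM ⇑(finRotate n ^ (p.2 : ℕ))) := by
  obtain ⟨m, rfl⟩ : ∃ m, n = m + 2 := ⟨n - 2, by omega⟩
  rw [Fintype.linearIndependent_iff]
  intro c hc
  simp only [conj_eq] at hc
  -- entry equations
  have E : ∀ a b : Fin (m+2),
      (∑ q : Fin (m+2-1) × Fin (m+2),
        if F q.1 (a - q.2) + q.2 = b then c q else 0) = 0 := by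
    intro a b
    have h1 := congrFun (congrFun hc a) b
    simpa only [Matrix.sum_apply, Matrix.smul_apply, smul_eq_mul, adjM,
      Matrix.of_apply, mul_ite, mul_one, mul_zero, Matrix.zero_apply] using h1
  -- Step A: all coefficients with i.val + 1 ≤ m vanish
  have hz : ∀ k : ℕ, ∀ i : Fin (m+2-1), (i : ℕ) = k → (i : ℕ) + 1 ≤ m →
      ∀ j₀ : Fin (m+2), c (i, j₀) = 0 := by
    intro k
    induction k using Nat.strong_induction_on with
    | _ k IH =>
      intro i hik hi j₀
      have hkm : k + 1 ≤ m := hik ▸ hi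
      have hlt : m + 1 - k < m + 2 := by omega
      have hE := E (j₀ + ⟨m + 1 - k, hlt⟩) j₀
      simp only [cond_iff m F hF] at hE
      have hab : (j₀ + ⟨m + 1 - k, hlt⟩) - j₀ = (⟨m + 1 - k, hlt⟩ : Fin (m+2)) := by ring
      have hne : ¬ (j₀ = (j₀ + ⟨m + 1 - k, hlt⟩) - 1) := by
        intro hcontra
        have h1 : (⟨m + 1 - k, hlt⟩ : Fin (m+2)) = 1 := by
          have h2 : j₀ + 1 = j₀ + ⟨m + 1 - k, hlt⟩ := by
            conv_lhs => rw [hcontra]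
            ring
          exact (add_left_cancel h2).symm
        have := congrArg Fin.val h1
        simp [Fin.val_one] at this
        omega
      simp only [hab, hne, false_and, and_false, or_false, Fin.val_mk] at hE
      rw [Fintype.sum_prod_type] at hE
      simp only [ite_and, Finset.sum_ite_eq', Finset.mem_univ, if_true] at hE
      rw [Finset.sum_eq_single i] at hE
      · rw [if_pos (by omega)] at hE
        exact hE
      · intro b _ hb
        split_ifs with hcond
        · have hbk : (b : ℕ) ≠ k := by
            intro h
            exact hb (Fin.ext (h.trans hik.symm))
          exact IH (b : ℕ) (by omega) b rfl (by omega) j₀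
        · rfl
      · intro h
        exact absurd (Finset.mem_univ i) h
  -- Step B: the remaining coefficients
  have hdiag : ∀ a : Fin (m+2),
      (∑ j : Fin (m+2), if j ≠ a then c (⟨m, by omega⟩, j) else 0) = 0 := by
    intro a
    have hE := E a (a - 1)
    simp only [cond_iff m F hF] at hE
    have h1 : a - (a - 1) = 1 := by ring
    have hcond : ∀ (i : Fin (m+2-1)) (j : Fin (m+2)),
        ((j = a - 1 ∧ ((a - (a-1) : Fin (m+2)) : ℕ) + (i : ℕ) + 1 ≤ m+2) ∨
          (True ∧ m+2 < ((a - j : Fin (m+2)) : ℕ) + (i : ℕ) + 1))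
        ↔ (j = a - 1 ∨ m + 2 < ((a - j : Fin (m+2)) : ℕ) + (i : ℕ) + 1) := by
      intro i j
      have hi : (i : ℕ) < m + 1 := i.isLt
      rw [h1]
      constructor
      · rintro (⟨hj, -⟩ | ⟨-, h2⟩)
        · exact Or.inl hj
        · exact Or.inr h2
      · rintro (hj | h2)
        · exact Or.inl ⟨hj, by rw [Fin.val_one]; omega⟩
        · exact Or.inr ⟨trivial, h2⟩
    simp only [hcond] at hE
    rw [Fintype.sum_prod_type] at hE
    rw [Finset.sum_eq_single (⟨m, by omega⟩ : Fin (m+2-1))] at hE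
    · have hcond2 : ∀ j : Fin (m+2),
          (j = a - 1 ∨ m + 2 < ((a - j : Fin (m+2)) : ℕ) + ((⟨m, by omega⟩ : Fin (m+2-1)) : ℕ) + 1)
          ↔ j ≠ a := by
        intro j
        simp only [Fin.val_mk]
        constructor
        · rintro (rfl | h2) hja
          · have h3 : a - (a - 1) = a - a := by rw [hja]
            rw [h1, sub_self] at h3
            have := congrArg Fin.val h3
            simp [Fin.val_one] at this
          · rw [hja, sub_self] at h2
            simp at h2
        · intro hja
          by_cases hj1 : j = a - 1
          · exact Or.inl hj1
          · refine Or.inr ?_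
            have h0 : a - j ≠ 0 := sub_ne_zero.mpr (Ne.symm hja)
            have hv0 : ((a - j : Fin (m+2)) : ℕ) ≠ 0 := by
              intro hv; exact h0 (Fin.ext (by simp [hv]))
            have hv1 : ((a - j : Fin (m+2)) : ℕ) ≠ 1 := by
              intro hv
              apply hj1
              have h4 : a - j = 1 := Fin.ext (by simp [hv, Fin.val_one])
              have : j = a - 1 := by
                have := sub_eq_iff_eq_add.mp h4
                rw [this]; ring
              exact this
            omega
      simp only [hcond2] at hE
      exact hE
    · intro b _ hb
      apply Finset.sum_eq_zero
      intro j _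
      split_ifs with hcond
      · have hbm : (b : ℕ) ≠ m := by
          intro h
          exact hb (Fin.ext h)
        have hblt : (b : ℕ) < m + 1 := b.isLt
        exact hz (b : ℕ) b rfl (by omega) j
      · rfl
    · intro h
      exact absurd (Finset.mem_univ _) h
  -- solve the circulant system
  set d : Fin (m+2) → ℝ := fun j => c (⟨m, by omega⟩, j) with hd
  have hS : ∀ a : Fin (m+2), (∑ j, d j) - d a = 0 := by
    intro a
    have h := hdiag a
    have hsplit : ∀ j : Fin (m+2),
        (if j ≠ a then c (⟨m, by omega⟩, j) else 0) = d j - (if j = a then d j else 0) := by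
      intro j
      by_cases hja : j = a
      · simp [hja, hd]
      · simp [hja, hd]
    rw [Finset.sum_congr rfl (fun j _ => hsplit j)] at h
    rw [Finset.sum_sub_distrib] at h
    simpa [Finset.sum_ite_eq', Finset.mem_univ] using h
  have hSval : (∑ j, d j) = 0 := by
    have hda : ∀ a, d a = ∑ j, d j := by
      intro a
      have := hS a
      linarith
    have h2 : (∑ j, d j) = (m+2 : ℝ) * (∑ j, d j) := by
      calc (∑ j, d j) = ∑ _a : Fin (m+2), (∑ j, d j) := by
            exact Finset.sum_congr rfl (fun a _ => hda a)
        _ = (m+2 : ℝ) * (∑ j, d j) := by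
            rw [Finset.sum_const, Finset.card_univ, Fintype.card_fin, nsmul_eq_mul]
            push_cast
            ring
    nlinarith [h2]
  have hdzero : ∀ a, d a = 0 := by
    intro a
    have := hS a
    rw [hSval] at this
    linarith
  -- finish
  intro p
  obtain ⟨i, j⟩ := p
  by_cases hi : (i : ℕ) + 1 ≤ m
  · exact hz (i : ℕ) i rfl hi j
  · have hilt : (i : ℕ) < m + 1 := i.isLt
    have : i = (⟨m, by omega⟩ : Fin (m+2-1)) := Fin.ext (by show (i : ℕ) = m; omega)
    rw [this]
    exact hdzero j
end

section
/- For n ≥ 2, the number of distinct conjugacy classes (under simultaneous conjugation by permutation matrices) of adjacency matrices of functions f : Fin n → Fin n with f not the identity is at least n(n-1). -/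
set_option maxHeartbeats 1600000

namespace OneInputAux

open Finset

variable {n : ℕ}

lemma adjM_mul (f g : Fin n → Fin n) : adjM f * adjM g = adjM (g ∘ f) := by
  ext i j
  simp only [adjM, Matrix.mul_apply, Matrix.of_apply, Function.comp_apply]
  rw [Finset.sum_eq_single (f i)]
  · simp
  · intro b _ hb
    rw [if_neg (Ne.symm hb), zero_mul]
  · intro h; exact absurd (Finset.mem_univ _) h

lemma adjM_id : adjM (id : Fin n → Fin n) = 1 := by
  ext i j
  simp [adjM, Matrix.one_apply]

lemma adjM_inj : Function.Injective (adjM (n := n)) := by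
  intro f g h
  funext i
  have h2 := congrFun (congrFun h i) (f i)
  simp only [adjM, Matrix.of_apply] at h2
  by_cases hgi : g i = f i
  · exact hgi.symm
  · rw [if_neg hgi] at h2
    exact absurd h2 one_ne_zero

lemma conj_to_fun (σ : Equiv.Perm (Fin n)) (f g : Fin n → Fin n)
    (h : adjM g = (adjM ⇑σ)⁻¹ * adjM f * adjM ⇑σ) : g = ⇑σ ∘ f ∘ ⇑σ⁻¹ := by
  have hinv : (adjM ⇑σ)⁻¹ = adjM ⇑σ⁻¹ := by
    apply Matrix.inv_eq_right_inv
    rw [adjM_mul]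
    have : (⇑σ⁻¹ ∘ ⇑σ) = (id : Fin n → Fin n) := by
      funext x; simp
    rw [this, adjM_id]
  apply adjM_inj
  rw [h, hinv, adjM_mul, adjM_mul]

/-- number of fixed points -/
def fixc (f : Fin n → Fin n) : ℕ := (Finset.univ.filter fun x => f x = x).card

/-- size of the image -/
def imgc (f : Fin n → Fin n) : ℕ := (Finset.univ.image f).card

lemma fixc_conj (σ : Equiv.Perm (Fin n)) (f : Fin n → Fin n) :
    fixc (⇑σ ∘ f ∘ ⇑σ⁻¹) = fixc f := by
  unfold fixc
  apply Finset.card_bij (fun x _ => (σ⁻¹ : Equiv.Perm (Fin n)) x)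
  · intro a ha
    simp only [mem_filter, mem_univ, true_and, Function.comp_apply] at ha ⊢
    have := congrArg (⇑(σ⁻¹ : Equiv.Perm (Fin n))) ha
    simpa using this
  · intro a _ b _ hab
    exact (Equiv.injective _) hab
  · intro b hb
    simp only [mem_filter, mem_univ, true_and, Function.comp_apply] at hb ⊢
    exact ⟨σ b, by simp [hb], by simp⟩

lemma imgc_conj (σ : Equiv.Perm (Fin n)) (f : Fin n → Fin n) :
    imgc (⇑σ ∘ f ∘ ⇑σ⁻¹) = imgc f := by
  unfold imgc
  have h1 : Finset.univ.image (⇑σ ∘ f ∘ ⇑σ⁻¹)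
      = ((Finset.univ.image ⇑(σ⁻¹ : Equiv.Perm (Fin n))).image f).image ⇑σ := by
    rw [Finset.image_image, Finset.image_image]
    rfl
  rw [h1, Finset.image_univ_equiv, Finset.card_image_of_injective _ (Equiv.injective σ)]

lemma card_filter_lt {B : ℕ} (h : B ≤ n) :
    ((Finset.univ : Finset (Fin n)).filter fun k => k.val < B).card = B := by
  have key : ((Finset.univ : Finset (Fin n)).filter fun k => k.val < B).card
      = (Finset.range B).card := by
    apply Finset.card_bij (fun m _ => m.val)
    · intro a ha
      simp only [mem_filter] at ha
      simp [Finset.mem_range, ha.2]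
    · intro a _ b _ hab
      exact Fin.val_injective hab
    · intro b hb
      simp only [Finset.mem_range] at hb
      exact ⟨⟨b, lt_of_lt_of_le hb h⟩, by simp [hb], rfl⟩
  rw [key, Finset.card_range]

/-- The model function on `ℕ`: `p` fixed points `0,…,p-1`, one cycle of length `L`
on `p,…,p+L-1`, then a tail chain and leaves mapping to `0`. -/
def gN (p L lam n k : ℕ) : ℕ :=
  if k < p then k
  else if k < p + L then (if k + 1 = p + L then p else k + 1)
  else if p + L + 1 ≤ k ∧ k ≤ p + L + (n - (p + L) - lam) then k - 1
  else 0

def gfin (n p L lam : ℕ) (hn : 0 < n) : Fin n → Fin n :=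
  fun k => ⟨gN p L lam n k.val % n, Nat.mod_lt _ hn⟩

section spec

variable {p L lam : ℕ}
  (hL : L = 0 ∨ L = 2 ∨ L = 3)
  (hs1 : 1 ≤ p + L) (hsn : p + L ≤ n)
  (hlam : (lam = 0 ∧ p + L = n) ∨ (1 ≤ lam ∧ lam ≤ n - (p + L)))

include hs1 hsn in
lemma gN_lt (k : ℕ) (hk : k < n) : gN p L lam n k < n := by
  unfold gN; split_ifs <;> omega

include hs1 hsn in
lemma gfin_val (hn : 0 < n) (k : Fin n) :
    (gfin n p L lam hn k).val = gN p L lam n k.val := by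
  exact Nat.mod_eq_of_lt (gN_lt hs1 hsn k.val k.isLt)

include hL hs1 hsn hlam in
lemma gN_fix_iff (k : ℕ) (hk : k < n) : gN p L lam n k = k ↔ k < p := by
  unfold gN; split_ifs <;> omega

include hL hs1 hsn hlam in
lemma gN_fix2_iff (k : ℕ) (hk : k < n) :
    gN p L lam n (gN p L lam n k) = k ↔ (k < p ∨ (L = 2 ∧ k < p + 2)) := by
  unfold gN; split_ifs <;> omega

include hL hs1 hsn hlam in
lemma gN_fix3_iff (k : ℕ) (hk : k < n) :
    gN p L lam n (gN p L lam n (gN p L lam n k)) = k ↔ (k < p ∨ (L = 3 ∧ k < p + 3)) := by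
  rcases Nat.lt_or_ge k p with h | h
  · rw [show gN p L lam n k = k from by unfold gN; split_ifs <;> omega,
      gN_fix2_iff hL hs1 hsn hlam k hk]
    omega
  rcases Nat.lt_or_ge k (p + L) with h2 | h2
  · by_cases h3 : k + 1 = p + L
    · rw [show gN p L lam n k = p from by unfold gN; split_ifs <;> omega]
      unfold gN; split_ifs <;> omega
    · rw [show gN p L lam n k = k + 1 from by unfold gN; split_ifs <;> omega]
      unfold gN; split_ifs <;> omega
  by_cases h3 : p + L + 1 ≤ k ∧ k ≤ p + L + (n - (p + L) - lam)
  · rw [show gN p L lam n k = k - 1 from by unfold gN; split_ifs <;> omega]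
    unfold gN; split_ifs <;> omega
  · rw [show gN p L lam n k = 0 from by unfold gN; split_ifs <;> omega]
    unfold gN; split_ifs <;> omega

include hL hs1 hsn hlam in
lemma gN_img_iff (j : ℕ) (hj : j < n) :
    (∃ k, k < n ∧ gN p L lam n k = j) ↔ j < n - lam := by
  constructor
  · rintro ⟨k, hk, he⟩
    unfold gN at he
    split_ifs at he <;> omega
  · intro hjn
    rcases Nat.lt_or_ge j p with hc | hc
    · exact ⟨j, by omega, by unfold gN; split_ifs <;> omega⟩
    rcases Nat.lt_or_ge j (p + L) with hc2 | hc2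
    · by_cases hj0 : j = p
      · refine ⟨p + L - 1, by omega, ?_⟩
        unfold gN; split_ifs <;> omega
      · refine ⟨j - 1, by omega, ?_⟩
        unfold gN; split_ifs <;> omega
    · refine ⟨j + 1, by omega, ?_⟩
      unfold gN; split_ifs <;> omega

include hL hs1 hsn hlam in
lemma fixc_gfin (hn : 0 < n) : fixc (gfin n p L lam hn) = p := by
  unfold fixc
  have h1 : (Finset.univ.filter fun x : Fin n => gfin n p L lam hn x = x)
      = Finset.univ.filter fun x : Fin n => x.val < p := by
    ext x
    simp only [mem_filter, mem_univ, true_and]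
    rw [Fin.ext_iff, gfin_val hs1 hsn hn, gN_fix_iff hL hs1 hsn hlam x.val x.isLt]
  rw [h1, card_filter_lt (by omega)]

include hL hs1 hsn hlam in
lemma fixc2_gfin (hn : 0 < n) :
    fixc (gfin n p L lam hn ∘ gfin n p L lam hn) = p + (if L = 2 then 2 else 0) := by
  unfold fixc
  have h1 : (Finset.univ.filter fun x : Fin n => (gfin n p L lam hn ∘ gfin n p L lam hn) x = x)
      = Finset.univ.filter fun x : Fin n => x.val < p + (if L = 2 then 2 else 0) := by
    ext x
    simp only [mem_filter, mem_univ, true_and, Function.comp_apply]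
    rw [Fin.ext_iff, gfin_val hs1 hsn hn, gfin_val hs1 hsn hn,
      gN_fix2_iff hL hs1 hsn hlam x.val x.isLt]
    split_ifs <;> omega
  rw [h1, card_filter_lt (by split_ifs <;> omega)]

include hL hs1 hsn hlam in
lemma fixc3_gfin (hn : 0 < n) :
    fixc ((gfin n p L lam hn ∘ gfin n p L lam hn) ∘ gfin n p L lam hn)
      = p + (if L = 3 then 3 else 0) := by
  unfold fixc
  have h1 : (Finset.univ.filter fun x : Fin n =>
        ((gfin n p L lam hn ∘ gfin n p L lam hn) ∘ gfin n p L lam hn) x = x)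
      = Finset.univ.filter fun x : Fin n => x.val < p + (if L = 3 then 3 else 0) := by
    ext x
    simp only [mem_filter, mem_univ, true_and, Function.comp_apply]
    rw [Fin.ext_iff, gfin_val hs1 hsn hn, gfin_val hs1 hsn hn, gfin_val hs1 hsn hn,
      gN_fix3_iff hL hs1 hsn hlam x.val x.isLt]
    split_ifs <;> omega
  rw [h1, card_filter_lt (by split_ifs <;> omega)]

include hL hs1 hsn hlam in
lemma imgc_gfin (hn : 0 < n) : imgc (gfin n p L lam hn) = n - lam := by
  unfold imgc
  have h1 : Finset.univ.image (gfin n p L lam hn)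
      = Finset.univ.filter fun j : Fin n => j.val < n - lam := by
    ext j
    simp only [mem_image, mem_filter, mem_univ, true_and]
    rw [← gN_img_iff hL hs1 hsn hlam j.val j.isLt]
    constructor
    · rintro ⟨k, hk⟩
      refine ⟨k.val, k.isLt, ?_⟩
      rw [← gfin_val hs1 hsn hn]
      exact congrArg Fin.val hk
    · rintro ⟨k, hkn, hk⟩
      refine ⟨⟨k, hkn⟩, ?_⟩
      apply Fin.val_injective
      rw [gfin_val hs1 hsn hn]
      exact hk
  rw [h1, card_filter_lt (by omega)]

end spec

/-- Parameters `(p, L, lam)` for index `(a, z)`, `1 ≤ a ≤ n-1`, `z < n`. -/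
def par (n a z : ℕ) : ℕ × ℕ × ℕ :=
  if z < n - a then (a, 0, z + 1)
  else if z - (n - a) + 1 ≤ a - 1 then (z - (n - a), 2, n - a)
  else if a ≤ n - 2 then (a - 1, 3, if a = n - 2 then 0 else 1)
  else (n - 2, 2, 0)

lemma par_valid {a z p L lam : ℕ} (hn : 2 ≤ n) (ha1 : 1 ≤ a) (ha2 : a ≤ n - 1)
    (hz : z < n) (h : par n a z = (p, L, lam)) :
    (L = 0 ∨ L = 2 ∨ L = 3) ∧ 1 ≤ p + L ∧ p + L ≤ n ∧
      ((lam = 0 ∧ p + L = n) ∨ (1 ≤ lam ∧ lam ≤ n - (p + L))) ∧ p ≤ n - 1 := by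
  unfold par at h
  split_ifs at h <;> simp only [Prod.mk.injEq] at h <;> omega

lemma par_inj {a z a' z' : ℕ} (hn : 2 ≤ n) (ha1 : 1 ≤ a) (ha2 : a ≤ n - 1) (hz : z < n)
    (ha1' : 1 ≤ a') (ha2' : a' ≤ n - 1) (hz' : z' < n)
    (h : par n a z = par n a' z') : a = a' ∧ z = z' := by
  unfold par at h
  split_ifs at h <;> simp only [Prod.mk.injEq] at h <;> omega

end OneInputAux

open OneInputAux in
/-- For `n ≥ 2` there are at least `n(n-1)` classes, under simultaneous
conjugation by permutation matrices, of adjacency matrices of non-identity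
functions `Fin n → Fin n`. -/
theorem card_classes_one_input_ge (n : ℕ) (hn : 2 ≤ n) :
    ∃ F : Fin (n * (n - 1)) → (Fin n → Fin n),
      (∀ i, F i ≠ id) ∧
      ∀ i j : Fin (n * (n - 1)),
        (∃ σ : Equiv.Perm (Fin n),
          adjM (F j) = (adjM ⇑σ)⁻¹ * adjM (F i) * adjM ⇑σ) → i = j := by
  have hn0 : 0 < n := by omega
  refine ⟨fun i => gfin n (par n (i.val / n + 1) (i.val % n)).1
      (par n (i.val / n + 1) (i.val % n)).2.1
      (par n (i.val / n + 1) (i.val % n)).2.2 hn0, ?_, ?_⟩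
  · -- non-identity
    intro i hid
    have hb1 : 1 ≤ i.val / n + 1 := Nat.succ_le_succ (Nat.zero_le _)
    have hb2 : i.val / n + 1 ≤ n - 1 := Nat.div_lt_of_lt_mul i.isLt
    have hb3 : i.val % n < n := Nat.mod_lt _ hn0
    rcases hpq : par n (i.val / n + 1) (i.val % n) with ⟨p, L, lam⟩
    obtain ⟨hL, hs1, hsn, hlam, hp⟩ := par_valid hn hb1 hb2 hb3 hpq
    simp only [hpq] at hid
    have h1 : fixc (gfin n p L lam hn0) = p := fixc_gfin hL hs1 hsn hlam hn0
    have h2 : fixc (id : Fin n → Fin n) = n := by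
      unfold fixc
      simp
    rw [hid, h2] at h1
    omega
  · intro i j ⟨σ, hσ⟩
    have hbi1 : 1 ≤ i.val / n + 1 := Nat.succ_le_succ (Nat.zero_le _)
    have hbi2 : i.val / n + 1 ≤ n - 1 := Nat.div_lt_of_lt_mul i.isLt
    have hbi3 : i.val % n < n := Nat.mod_lt _ hn0
    have hbj1 : 1 ≤ j.val / n + 1 := Nat.succ_le_succ (Nat.zero_le _)
    have hbj2 : j.val / n + 1 ≤ n - 1 := Nat.div_lt_of_lt_mul j.isLt
    have hbj3 : j.val % n < n := Nat.mod_lt _ hn0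
    rcases hpi : par n (i.val / n + 1) (i.val % n) with ⟨p, L, lam⟩
    rcases hpj : par n (j.val / n + 1) (j.val % n) with ⟨p', L', lam'⟩
    obtain ⟨hL, hs1, hsn, hlam, hp⟩ := par_valid hn hbi1 hbi2 hbi3 hpi
    obtain ⟨hL', hs1', hsn', hlam', hp'⟩ := par_valid hn hbj1 hbj2 hbj3 hpj
    simp only [hpi, hpj] at hσ
    have hfun : gfin n p' L' lam' hn0 = ⇑σ ∘ gfin n p L lam hn0 ∘ ⇑σ⁻¹ :=
      conj_to_fun σ _ _ hσ
    set f := gfin n p L lam hn0 with hf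
    set g := gfin n p' L' lam' hn0 with hg
    have e1 : fixc g = fixc f := by rw [hfun, fixc_conj]
    have e2 : fixc (g ∘ g) = fixc (f ∘ f) := by
      rw [hfun]
      have : (⇑σ ∘ f ∘ ⇑σ⁻¹) ∘ (⇑σ ∘ f ∘ ⇑σ⁻¹) = ⇑σ ∘ (f ∘ f) ∘ ⇑σ⁻¹ := by
        funext x; simp
      rw [this, fixc_conj]
    have e3 : fixc ((g ∘ g) ∘ g) = fixc ((f ∘ f) ∘ f) := by
      rw [hfun]
      have : ((⇑σ ∘ f ∘ ⇑σ⁻¹) ∘ (⇑σ ∘ f ∘ ⇑σ⁻¹)) ∘ (⇑σ ∘ f ∘ ⇑σ⁻¹)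
          = ⇑σ ∘ ((f ∘ f) ∘ f) ∘ ⇑σ⁻¹ := by
        funext x; simp
      rw [this, fixc_conj]
    have e4 : imgc g = imgc f := by rw [hfun, imgc_conj]
    rw [hf, hg, fixc_gfin hL hs1 hsn hlam hn0, fixc_gfin hL' hs1' hsn' hlam' hn0] at e1
    rw [hf, hg, fixc2_gfin hL hs1 hsn hlam hn0, fixc2_gfin hL' hs1' hsn' hlam' hn0] at e2
    rw [hf, hg, fixc3_gfin hL hs1 hsn hlam hn0, fixc3_gfin hL' hs1' hsn' hlam' hn0] at e3
    rw [hf, hg, imgc_gfin hL hs1 hsn hlam hn0, imgc_gfin hL' hs1' hsn' hlam' hn0] at e4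
    have htriple : p = p' ∧ L = L' ∧ lam = lam' := by
      rcases hL with rfl | rfl | rfl <;> rcases hL' with rfl | rfl | rfl <;>
        simp_all <;> omega
    obtain ⟨rfl, rfl, rfl⟩ := htriple
    have hpar : par n (i.val / n + 1) (i.val % n) = par n (j.val / n + 1) (j.val % n) := by
      rw [hpi, hpj]
    obtain ⟨haz1, haz2⟩ := par_inj hn hbi1 hbi2 hbi3 hbj1 hbj2 hbj3 hpar
    apply Fin.val_injective
    have h5 : i.val / n = j.val / n := Nat.add_right_cancel haz1
    calc i.val = n * (i.val / n) + i.val % n := (Nat.div_add_mod _ _).symm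
      _ = n * (j.val / n) + j.val % n := by rw [h5, haz2]
      _ = j.val := Nat.div_add_mod _ _
end

section
/- Excluding the identity function, there are exactly 26 functions f : {1,2,3} → {1,2,3} with f ≠ id, and under the equivalence of conjugation by permutations of {1,2,3} they fall into exactly 6 equivalence classes, with class sizes 2, 3, 3, 6, 6, 6. -/
def myF : Fin 6 → (Fin 3 → Fin 3) :=
  ![![1,2,0], ![0,0,0], ![0,2,1], ![0,0,1], ![0,0,2], ![1,0,0]]

def myS : Fin 6 → ℕ := ![2,3,3,6,6,6]

/-- Excluding the identity, there are exactly 26 functions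
`f : Fin 3 → Fin 3`, and under conjugation by permutations of `Fin 3` they
fall into exactly 6 classes, of sizes `2, 3, 3, 6, 6, 6`. -/
theorem three_cell_one_input_classification :
    Nat.card {f : Fin 3 → Fin 3 // f ≠ id} = 26 ∧
    ∃ F : Fin 6 → (Fin 3 → Fin 3),
      (∀ i, F i ≠ id) ∧
      (∀ i j : Fin 6,
        (∃ σ : Equiv.Perm (Fin 3), F j = ⇑σ ∘ F i ∘ ⇑σ.symm) → i = j) ∧
      (∀ f : Fin 3 → Fin 3, f ≠ id →
        ∃ i, ∃ σ : Equiv.Perm (Fin 3), f = ⇑σ ∘ F i ∘ ⇑σ.symm) ∧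
      ∃ s : Fin 6 → ℕ,
        ({s 0, s 1, s 2, s 3, s 4, s 5} : Multiset ℕ) = {2, 3, 3, 6, 6, 6} ∧
        ∀ i, Nat.card {g : Fin 3 → Fin 3 //
          ∃ σ : Equiv.Perm (Fin 3), g = ⇑σ ∘ F i ∘ ⇑σ.symm} = s i := by
  refine ⟨?_, myF, ?_, ?_, ?_, myS, ?_, ?_⟩
  · rw [Nat.card_eq_fintype_card]; decide
  · decide
  · decide
  · decide
  · decide
  · intro i
    rw [Nat.card_eq_fintype_card]
    revert i; decide
end
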